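/- arXiv:2410.09083 — 2 statements merged into one kernel-verified Lean document; each statement's English description precedes it below -/
import Mathlib

section
/- Define the OR interaction by I_or(S) = -\sum_{T \subseteq S} (-1)^{|S|-|T|} w(N \setminus T) for a function w on subsets of a finite set N. Then for every T \subseteq N, \sum_{S \subseteq N, S \cap T \neq \emptyset} I_or(S) = w(T) - w(\emptyset). -/
/-!
Writing `f U = w (N \ U)`, the OR interaction `I_or` is minus the Möbius transform of `f` on the
Boolean lattice, so by Möbius inversion its sum over the subsets of any `M` is `-w (N \ M)`. The
sets meeting `T` are the subsets of `N` that are not subsets of `N \ T`, so their total is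
`-w ∅ + w T`.
-/

open Finset

section MoebiusInversion

variable {α G : Type*} [DecidableEq α] [AddCommGroup G]

theorem sum_powerset_neg_one_pow_card_smul (s : Finset α) (a : G) :
    ∑ t ∈ s.powerset, (-1 : ℤ) ^ #t • a = if s = ∅ then a else 0 := by
  rw [← sum_smul, sum_powerset_neg_one_pow_card, ite_smul, one_smul, zero_smul]

theorem sum_Icc_neg_one_pow_card_sub_smul {s t : Finset α} (hst : s ⊆ t) (a : G) :
    ∑ u ∈ Icc s t, (-1 : ℤ) ^ (#u - #s) • a = if s = t then a else 0 := by
  have hdisj {u : Finset α} (hu : u ∈ (t \ s).powerset) : Disjoint s u :=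
    disjoint_sdiff.mono_right (mem_powerset.mp hu)
  have hinj : Set.InjOn (s ∪ ·) (t \ s).powerset := fun u hu v hv huv => by
    rw [← union_sdiff_cancel_left (hdisj hu), ← union_sdiff_cancel_left (hdisj hv)]
    exact congrArg (· \ s) huv
  rw [Icc_eq_image_powerset hst, sum_image hinj]
  calc ∑ u ∈ (t \ s).powerset, (-1 : ℤ) ^ (#(s ∪ u) - #s) • a
      = ∑ u ∈ (t \ s).powerset, (-1 : ℤ) ^ #u • a :=
        sum_congr rfl fun u hu => by rw [card_union_of_disjoint (hdisj hu), add_tsub_cancel_left]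
    _ = if s = t then a else 0 := by
        rw [sum_powerset_neg_one_pow_card_smul]
        exact if_congr (by rw [sdiff_eq_empty_iff_subset, subset_antisymm_iff, and_iff_right hst])
          rfl rfl

theorem sum_powerset_sum_powerset_neg_one_pow_smul (s : Finset α) (f : Finset α → G) :
    ∑ t ∈ s.powerset, ∑ u ∈ t.powerset, (-1 : ℤ) ^ (#t - #u) • f u = f s := by
  rw [sum_comm' (t' := s.powerset) (s' := fun u => Icc u s) (by
    intro t u
    simp only [mem_powerset, mem_Icc]
    exact ⟨fun ⟨hts, hut⟩ => ⟨⟨hut, hts⟩, hut.trans hts⟩, fun ⟨h, _⟩ => ⟨h.2, h.1⟩⟩)]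
  rw [sum_congr rfl fun u hu => sum_Icc_neg_one_pow_card_sub_smul (mem_powerset.mp hu) (f u)]
  simp

theorem sum_powerset_filter_inter_nonempty (s t : Finset α) (f : Finset α → G) :
    ∑ u ∈ s.powerset with (u ∩ t).Nonempty, f u =
      ∑ u ∈ s.powerset, f u - ∑ u ∈ (s \ t).powerset, f u := by
  rw [eq_sub_iff_add_eq, ← sum_filter_add_sum_filter_not s.powerset (fun u => (u ∩ t).Nonempty)]
  congr 2
  ext u
  simp [subset_sdiff, disjoint_iff_inter_eq_empty, not_nonempty_iff_eq_empty]

end MoebiusInversion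

theorem or_interaction_universal_matching
    {N : Type*} [Fintype N] [DecidableEq N] (w : Finset N → ℝ) :
    ∀ T : Finset N,
      (∑ S ∈ Finset.univ.powerset.filter (fun S : Finset N => (S ∩ T).Nonempty),
        (-(∑ U ∈ S.powerset, (-1 : ℝ) ^ (S.card - U.card) * w (Finset.univ \ U))))
      = w T - w ∅ := by
  intro T
  have moebius (s : Finset N) :
      ∑ S ∈ s.powerset, ∑ U ∈ S.powerset, (-1 : ℝ) ^ (#S - #U) * w (univ \ U) = w (univ \ s) := by
    simpa only [zsmul_eq_mul, Int.cast_pow, Int.cast_neg, Int.cast_one] using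
      sum_powerset_sum_powerset_neg_one_pow_smul s (fun U => w (univ \ U))
  rw [sum_powerset_filter_inter_nonempty, sum_neg_distrib, sum_neg_distrib, moebius, moebius,
    sdiff_self, bot_eq_empty, sdiff_sdiff_right_self, inf_eq_inter, univ_inter]
  ring
end

section
/- Let N be a finite set and v : Finset N \to \mathbb{R}. Suppose v = v_and + v_or as a pointwise sum of two functions. Define I_and(S) = \sum_{T \subseteq S} (-1)^{|S|-|T|} v_and(T) and I_or(S) = -\sum_{T \subseteq S} (-1)^{|S|-|T|} v_or(N \setminus T). If v_or(\emptyset) = 0, then for every T \subseteq N: v(T) = v(\emptyset) + \sum_{\emptyset \neq S \subseteq T} I_and(S) + \sum_{S \subseteq N, S \cap T \neq \emptyset} I_or(S). -/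
/-!
Both interaction families are Möbius transforms on the Boolean lattice of subsets, and summing
the Möbius transform of `f` over the subsets of `W` gives back `f W`. Hence the AND interactions
of the nonempty `S ⊆ T` add up to `vand T - vand ∅`, and the OR interactions of the `S` meeting `T`
add up to minus the difference between the sum over all `S ⊆ N` and the sum over `S ⊆ N \ T`,
which after complementation is `vor T - vor ∅`.
-/

open Finset

section MoebiusTransform

variable {α R : Type*} [DecidableEq α] [Ring R]

def moebiusTransform (f : Finset α → R) (S : Finset α) : R :=
  ∑ U ∈ S.powerset, (-1 : R) ^ (#S - #U) * f U

theorem sum_Icc_neg_one_pow_card_sub {U W : Finset α} (h : U ⊆ W) :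
    ∑ S ∈ Icc U W, (-1 : R) ^ (#S - #U) = if U = W then 1 else 0 := by
  have hinj : Set.InjOn (U ∪ ·) (W \ U).powerset := fun R₁ h₁ R₂ h₂ heq => by
    simpa [union_sdiff_cancel_left (disjoint_sdiff.mono_right (mem_powerset.1 h₁)),
      union_sdiff_cancel_left (disjoint_sdiff.mono_right (mem_powerset.1 h₂))]
      using congrArg (· \ U) heq
  rw [Icc_eq_image_powerset h, sum_image hinj]
  calc ∑ S ∈ (W \ U).powerset, (-1 : R) ^ (#(U ∪ S) - #U)
      = ∑ S ∈ (W \ U).powerset, (-1 : R) ^ #S := sum_congr rfl fun S hS => by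
        rw [card_union_of_disjoint (disjoint_sdiff.mono_right (mem_powerset.1 hS)),
          Nat.add_sub_cancel_left]
    _ = ((∑ S ∈ (W \ U).powerset, (-1 : ℤ) ^ #S : ℤ) : R) := by push_cast; rfl
    _ = if U = W then 1 else 0 := by
      have hWU : W ⊆ U ↔ U = W := ⟨h.antisymm, fun e => e ▸ subset_rfl⟩
      simp only [sum_powerset_neg_one_pow_card, sdiff_eq_empty_iff_subset, hWU, Int.cast_ite,
        Int.cast_one, Int.cast_zero]

theorem sum_powerset_moebiusTransform (f : Finset α → R) (W : Finset α) :
    ∑ S ∈ W.powerset, moebiusTransform f S = f W :=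
  calc ∑ S ∈ W.powerset, ∑ U ∈ S.powerset, (-1 : R) ^ (#S - #U) * f U
      = ∑ U ∈ W.powerset, ∑ S ∈ Icc U W, (-1 : R) ^ (#S - #U) * f U :=
        sum_comm' fun S U => by
          simp only [mem_powerset, mem_Icc]
          exact ⟨fun ⟨hS, hU⟩ => ⟨⟨hU, hS⟩, hU.trans hS⟩, fun ⟨hU, _⟩ => ⟨hU.2, hU.1⟩⟩
    _ = ∑ U ∈ W.powerset, if U = W then f U else 0 := sum_congr rfl fun U hU => by
        rw [← sum_mul, sum_Icc_neg_one_pow_card_sub (mem_powerset.1 hU), ite_mul, one_mul,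
          zero_mul]
    _ = f W := by simp

theorem sum_powerset_filter_inter_nonempty_moebiusTransform (f : Finset α → R)
    (W T : Finset α) :
    ∑ S ∈ W.powerset with (S ∩ T).Nonempty, moebiusTransform f S = f W - f (W \ T) := by
  have hdisjoint : {S ∈ W.powerset | ¬(S ∩ T).Nonempty} = (W \ T).powerset := by
    ext S
    simp [not_nonempty_iff_eq_empty, ← disjoint_iff_inter_eq_empty, subset_sdiff]
  rw [eq_sub_iff_add_eq, ← sum_powerset_moebiusTransform f (W \ T), ← hdisjoint,
    sum_filter_add_sum_filter_not, sum_powerset_moebiusTransform]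

theorem sum_powerset_filter_nonempty_moebiusTransform (f : Finset α → R) (T : Finset α) :
    ∑ S ∈ T.powerset with S.Nonempty, moebiusTransform f S = f T - f ∅ := by
  rw [← Finset.sdiff_self T, ← sum_powerset_filter_inter_nonempty_moebiusTransform]
  refine sum_congr (filter_congr fun S hS => ?_) fun _ _ => rfl
  rw [inter_eq_left.2 (mem_powerset.1 hS)]

end MoebiusTransform

theorem and_or_universal_matching
    {N : Type*} [Fintype N] [DecidableEq N]
    (v vand vor : Finset N → ℝ)
    (hsum : ∀ T, v T = vand T + vor T)
    (hvor : vor ∅ = 0) :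
    ∀ T : Finset N,
      v T = v ∅
        + (∑ S ∈ T.powerset.filter (fun S => S.Nonempty),
            (∑ U ∈ S.powerset, (-1 : ℝ) ^ (S.card - U.card) * vand U))
        + (∑ S ∈ Finset.univ.powerset.filter (fun S : Finset N => (S ∩ T).Nonempty),
            (-(∑ U ∈ S.powerset, (-1 : ℝ) ^ (S.card - U.card) * vor (Finset.univ \ U)))) := by
  intro T
  have hand := sum_powerset_filter_nonempty_moebiusTransform vand T
  have hor := sum_powerset_filter_inter_nonempty_moebiusTransform
    (fun U => vor (univ \ U)) univ T
  simp only [moebiusTransform, Finset.sdiff_self, sdiff_sdiff_right_self, inf_eq_inter,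
    univ_inter] at hand hor
  rw [hand, sum_neg_distrib, hor, hsum, hsum, hvor]
  ring
end
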